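/- arXiv:2312.04327 — 3 statements merged into one kernel-verified Lean document; each statement's English description precedes it below -/
import Mathlib

section
/- Let P, N, m be positive integers with 1 ≤ N ≤ P, let f : {ω ⊆ {1,…,P}} → ℝ, and let Pr[·|·] be a sampling kernel for cardinality N. Then there exists π* in the standard simplex S^{P−1} whose support {i : π*_i ≠ 0} has cardinality at most N and which maximizes the expected performance over the simplex: G(π) ≤ G(π*) for every π ∈ S^{P−1}. (Proposition: there exists a maximizer of the sampling-distribution optimization problem that is supported on an index set of size at most N.) -/
open Finset

/-- **Proposition 1.** There exists a maximizer of the sampling-distribution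
optimization problem that is supported on an index set of size at most `N`. -/
theorem stmt_0 (P N m : ℕ) (hP : 0 < P) (hN : 1 ≤ N) (hNP : N ≤ P) (hm : 0 < m)
    (f : Finset (Fin P) → ℝ)
    (Pr : (Fin P → ℝ) → Finset (Fin P) → ℝ)
    (hPr_nonneg : ∀ π : Fin P → ℝ, ((∀ i, 0 ≤ π i ∧ π i ≤ 1) ∧ ∑ i, π i = 1) →
      ∀ ω ∈ (univ : Finset (Fin P)).powersetCard N, 0 ≤ Pr π ω)
    (hPr_sum : ∀ π : Fin P → ℝ, ((∀ i, 0 ≤ π i ∧ π i ≤ 1) ∧ ∑ i, π i = 1) →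
      ∑ ω ∈ (univ : Finset (Fin P)).powersetCard N, Pr π ω = 1)
    (hPr_supp : ∀ π : Fin P → ℝ, ((∀ i, 0 ≤ π i ∧ π i ≤ 1) ∧ ∑ i, π i = 1) →
      ∀ Γ : Finset (Fin P), Γ.card = N → (∀ i, i ∉ Γ → π i = 0) → Pr π Γ = 1)
    (G : (Fin P → ℝ) → ℝ)
    (hG : ∀ π, G π = ∑ ω ∈ (univ : Finset (Fin P)).powersetCard N, Pr π ω * f ω) :
    ∃ πstar : Fin P → ℝ,
      ((∀ i, 0 ≤ πstar i ∧ πstar i ≤ 1) ∧ ∑ i, πstar i = 1) ∧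
      Set.ncard {i : Fin P | πstar i ≠ 0} ≤ N ∧
      ∀ π : Fin P → ℝ, ((∀ i, 0 ≤ π i ∧ π i ≤ 1) ∧ ∑ i, π i = 1) → G π ≤ G πstar := by
  -- the family of N-subsets is nonempty
  have hne : ((univ : Finset (Fin P)).powersetCard N).Nonempty := by
    rw [Finset.powersetCard_nonempty]
    simpa using hNP
  obtain ⟨ω, hωmem, hωmax⟩ := Finset.exists_max_image _ f hne
  have hωcard : ω.card = N := (Finset.mem_powersetCard.mp hωmem).2
  set πs : Fin P → ℝ := fun i => if i ∈ ω then (N : ℝ)⁻¹ else 0 with hπs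
  have hNpos : (0 : ℝ) < N := by exact_mod_cast hN
  have hfeas : ((∀ i, 0 ≤ πs i ∧ πs i ≤ 1) ∧ ∑ i, πs i = 1) := by
    constructor
    · intro i
      by_cases h : i ∈ ω <;> simp [hπs, h]
      rw [inv_le_one_iff₀]
      right
      exact_mod_cast hN
    · rw [Finset.sum_ite_mem, Finset.univ_inter, Finset.sum_const, hωcard,
        nsmul_eq_mul, mul_inv_cancel₀ (ne_of_gt hNpos)]
  have hsupp : ∀ i, i ∉ ω → πs i = 0 := fun i h => by simp [hπs, h]
  have hPr1 : Pr πs ω = 1 := hPr_supp πs hfeas ω hωcard hsupp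
  -- all other weights vanish
  have hzero : ∀ ω' ∈ (univ : Finset (Fin P)).powersetCard N, ω' ≠ ω → Pr πs ω' = 0 := by
    intro ω' hω' hne'
    have hsum := hPr_sum πs hfeas
    rw [← Finset.add_sum_erase _ _ hωmem, hPr1] at hsum
    have hrest : ∑ x ∈ ((univ : Finset (Fin P)).powersetCard N).erase ω, Pr πs x = 0 := by
      linarith
    have := (Finset.sum_eq_zero_iff_of_nonneg (fun x hx =>
      hPr_nonneg πs hfeas x (Finset.mem_of_mem_erase hx))).mp hrest
    exact this ω' (Finset.mem_erase.mpr ⟨hne', hω'⟩)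
  have hGs : G πs = f ω := by
    rw [hG]
    rw [Finset.sum_eq_single ω]
    · rw [hPr1, one_mul]
    · intro b hb hne'
      rw [hzero b hb hne', zero_mul]
    · intro h; exact absurd hωmem h
  refine ⟨πs, hfeas, ?_, ?_⟩
  · have : {i : Fin P | πs i ≠ 0} ⊆ (ω : Set (Fin P)) := by
      intro i hi
      by_contra h
      exact hi (hsupp i h)
    calc Set.ncard {i : Fin P | πs i ≠ 0} ≤ (ω : Set (Fin P)).ncard :=
          Set.ncard_le_ncard this ω.finite_toSet
      _ = N := by rw [Set.ncard_coe_finset, hωcard]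
  · intro π hπ
    rw [hG, hGs]
    calc ∑ ω' ∈ (univ : Finset (Fin P)).powersetCard N, Pr π ω' * f ω'
        ≤ ∑ ω' ∈ (univ : Finset (Fin P)).powersetCard N, Pr π ω' * f ω := by
          apply Finset.sum_le_sum
          intro x hx
          exact mul_le_mul_of_nonneg_left (hωmax x hx) (hPr_nonneg π hπ x hx)
      _ = f ω := by rw [← Finset.sum_mul, hPr_sum π hπ, one_mul]
end

section
/- Let η be a nonnegative monotone submodular set function on the subsets of {1,…,P}, and let (ω_t)_{t≥0} be a greedy sequence for η starting from ω_0 = ∅. Then for all positive integers t and N, and for every ω ⊆ {1,…,P} with |ω| ≤ N, one has η(ω_t) ≥ (1 − e^{−t/N}) · η(ω); in particular η(ω_t) ≥ (1 − e^{−t/N}) · max_{|ω| ≤ N} η(ω). -/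
/-- **Nemhauser–Wolsey–Fisher.** For a nonnegative monotone submodular set function `η`,
the greedy sequence `ω t` satisfies `η (ω t) ≥ (1 - e^(-t/N)) · η ω` for every set `ω`
of cardinality at most `N`. -/
theorem stmt_3 (P : ℕ) (η : Finset (Fin P) → ℝ)
    (hnonneg : ∀ ω : Finset (Fin P), 0 ≤ η ω)
    (hmono : ∀ ω₁ ω₂ : Finset (Fin P), ω₁ ⊆ ω₂ → η ω₁ ≤ η ω₂)
    (hsubmod : ∀ ω₁ ω₂ : Finset (Fin P), ω₁ ⊆ ω₂ → ∀ i : Fin P,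
      η (insert i ω₂) - η ω₂ ≤ η (insert i ω₁) - η ω₁)
    (ω : ℕ → Finset (Fin P)) (h0 : ω 0 = ∅)
    (hgreedy : ∀ t : ℕ, ∃ v : Fin P, ω (t + 1) = insert v (ω t) ∧
      ∀ v' : Fin P, η (insert v' (ω t)) ≤ η (insert v (ω t))) :
    ∀ t N : ℕ, 0 < t → 0 < N → ∀ S : Finset (Fin P), S.card ≤ N →
      (1 - Real.exp (-(t : ℝ) / (N : ℝ))) * η S ≤ η (ω t) := by
  -- Subadditivity of marginal gains
  have key : ∀ (A B : Finset (Fin P)),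
      η (B ∪ A) - η B ≤ ∑ v ∈ A, (η (insert v B) - η B) := by
    intro A B
    induction A using Finset.induction_on with
    | empty => simp
    | @insert a s hx ih =>
      rw [Finset.sum_insert hx, Finset.union_insert]
      have h1 : η (insert a (B ∪ s)) - η (B ∪ s) ≤ η (insert a B) - η B :=
        hsubmod B (B ∪ s) Finset.subset_union_left a
      linarith
  intro t N _ hN S hcard
  have hNpos : (0:ℝ) < N := by exact_mod_cast hN
  -- the one-step inequality
  have step : ∀ t : ℕ, η S - η (ω (t+1)) ≤ (1 - 1/(N:ℝ)) * (η S - η (ω t)) := by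
    intro t
    obtain ⟨v, hv, hbest⟩ := hgreedy t
    have hg0 : 0 ≤ η (insert v (ω t)) - η (ω t) := by
      have := hmono (ω t) (insert v (ω t)) (Finset.subset_insert _ _); linarith
    have hS : η S ≤ η (ω t ∪ S) := hmono _ _ Finset.subset_union_right
    have hsum : ∑ u ∈ S, (η (insert u (ω t)) - η (ω t)) ≤
        S.card • (η (insert v (ω t)) - η (ω t)) := by
      apply Finset.sum_le_card_nsmul
      intro u _
      have := hbest u; linarith
    have hcardle : (S.card : ℝ) * (η (insert v (ω t)) - η (ω t)) ≤
        (N:ℝ) * (η (insert v (ω t)) - η (ω t)) := by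
      apply mul_le_mul_of_nonneg_right _ hg0
      exact_mod_cast hcard
    have hk := key S (ω t)
    rw [nsmul_eq_mul] at hsum
    have hmain : η S - η (ω t) ≤ (N:ℝ) * (η (ω (t+1)) - η (ω t)) := by
      rw [hv]; linarith
    rw [hv]
    have hN1 : (1:ℝ)/N * (η S - η (ω t)) ≤ η (insert v (ω t)) - η (ω t) := by
      rw [div_mul_eq_mul_div, one_mul, div_le_iff₀ hNpos]
      rw [hv] at hmain; linarith [hmain]
    have hr : (1 - 1/(N:ℝ)) * (η S - η (ω t)) =
        (η S - η (ω t)) - 1/(N:ℝ) * (η S - η (ω t)) := by ring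
    linarith
  -- iterate
  have iter : ∀ t : ℕ, η S - η (ω t) ≤ (1 - 1/(N:ℝ))^t * η S := by
    intro t
    induction t with
    | zero => simp [h0]; linarith [hnonneg (∅ : Finset (Fin P))]
    | succ t ih =>
      have h1 : (0:ℝ) ≤ 1 - 1/(N:ℝ) := by
        rw [sub_nonneg, div_le_one hNpos]; exact_mod_cast hN
      calc η S - η (ω (t+1)) ≤ (1 - 1/(N:ℝ)) * (η S - η (ω t)) := step t
        _ ≤ (1 - 1/(N:ℝ)) * ((1 - 1/(N:ℝ))^t * η S) := by
            exact mul_le_mul_of_nonneg_left ih h1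
        _ = (1 - 1/(N:ℝ))^(t+1) * η S := by ring
  have hexp : (1 - 1/(N:ℝ))^t ≤ Real.exp (-(t:ℝ)/(N:ℝ)) := by
    have h1 : (0:ℝ) ≤ 1 - 1/(N:ℝ) := by
      rw [sub_nonneg, div_le_one hNpos]; exact_mod_cast hN
    have h2 : 1 - 1/(N:ℝ) ≤ Real.exp (-(1/(N:ℝ))) := by
      have := Real.add_one_le_exp (-(1/(N:ℝ))); linarith
    calc (1 - 1/(N:ℝ))^t ≤ (Real.exp (-(1/(N:ℝ))))^t := pow_le_pow_left₀ h1 h2 t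
      _ = Real.exp (t * -(1/(N:ℝ))) := by rw [← Real.exp_nat_mul]
      _ = Real.exp (-(t:ℝ)/(N:ℝ)) := by ring_nf
  have := iter t
  have hSnn := hnonneg S
  nlinarith [mul_le_mul_of_nonneg_right hexp hSnn]
end

section
/- Let η be a nonnegative monotone submodular set function on the subsets of {1,…,P}, let N be a positive integer, and let (ω_t)_{t≥0} be a greedy sequence for η starting from ω_0 = ∅. Then for every ω ⊆ {1,…,P} with |ω| ≤ N, one has η(ω_N) ≥ (1 − 1/e) · η(ω), where e = exp(1). -/
/-- The greedy algorithm for a nonnegative monotone submodular function achieves a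
`(1 - 1/e)`-approximation after `N` steps, for the cardinality constraint `N`. -/
theorem stmt_4 (P N : ℕ) (hN : 0 < N) (η : Finset (Fin P) → ℝ)
    (hnonneg : ∀ ω : Finset (Fin P), 0 ≤ η ω)
    (hmono : ∀ ω₁ ω₂ : Finset (Fin P), ω₁ ⊆ ω₂ → η ω₁ ≤ η ω₂)
    (hsubmod : ∀ ω₁ ω₂ : Finset (Fin P), ω₁ ⊆ ω₂ → ∀ i : Fin P,
      η (insert i ω₂) - η ω₂ ≤ η (insert i ω₁) - η ω₁)
    (ω : ℕ → Finset (Fin P)) (h0 : ω 0 = ∅)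
    (hgreedy : ∀ t : ℕ, ∃ v : Fin P, ω (t + 1) = insert v (ω t) ∧
      ∀ v' : Fin P, η (insert v' (ω t)) ≤ η (insert v (ω t))) :
    ∀ S : Finset (Fin P), S.card ≤ N →
      (1 - 1 / Real.exp 1) * η S ≤ η (ω N) := by
  intro S hS
  have hNpos : (0:ℝ) < (N:ℝ) := by exact_mod_cast hN
  -- generic union bound from submodularity
  have key : ∀ (T : Finset (Fin P)) (g : ℝ), 0 ≤ g →
      (∀ v : Fin P, η (insert v T) - η T ≤ g) →
      ∀ A : Finset (Fin P), η (A ∪ T) ≤ η T + A.card * g := by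
    intro T g hg hgv A
    induction A using Finset.induction_on with
    | empty => simp
    | @insert a A ha ih =>
      have hsub : T ⊆ A ∪ T := Finset.subset_union_right
      have h1 : η (insert a (A ∪ T)) - η (A ∪ T) ≤ η (insert a T) - η T :=
        hsubmod T (A ∪ T) hsub a
      have h2 : η (insert a T) - η T ≤ g := hgv a
      have hcard : ((insert a A).card : ℝ) = A.card + 1 := by
        rw [Finset.card_insert_of_notMem ha]; push_cast; ring
      have : η ((insert a A) ∪ T) = η (insert a (A ∪ T)) := by
        rw [Finset.insert_union]
      rw [this, hcard]
      nlinarith [ih]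
  -- step inequality
  have step : ∀ t : ℕ, η S - η (ω (t+1)) ≤ (1 - 1/(N:ℝ)) * (η S - η (ω t)) := by
    intro t
    obtain ⟨v, hv, hvmax⟩ := hgreedy t
    set g : ℝ := η (ω (t+1)) - η (ω t) with hgdef
    have hg0 : 0 ≤ g := by
      have h := hmono (ω t) (insert v (ω t)) (Finset.subset_insert _ _)
      rw [hgdef, hv]; linarith
    have hgv : ∀ v' : Fin P, η (insert v' (ω t)) - η (ω t) ≤ g := by
      intro v'; have := hvmax v'; rw [hgdef, hv]; linarith
    have hb := key (ω t) g hg0 hgv S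
    have hSm : η S ≤ η (S ∪ ω t) := hmono _ _ Finset.subset_union_left
    have hcard : (S.card : ℝ) ≤ (N:ℝ) := by exact_mod_cast hS
    have : η S ≤ η (ω t) + (N:ℝ) * g := by
      have hcg : (S.card : ℝ) * g ≤ (N:ℝ) * g := by
        apply mul_le_mul_of_nonneg_right hcard hg0
      linarith
    have hne : (N:ℝ) ≠ 0 := ne_of_gt hNpos
    have hdiv : η S - η (ω t) ≤ (N:ℝ) * g := by linarith
    have hupos : (0:ℝ) < 1/(N:ℝ) := by positivity
    have h6 := mul_le_mul_of_nonneg_left hdiv hupos.le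
    have h7 : (1/(N:ℝ)) * ((N:ℝ) * g) = g := by field_simp
    have hgg : η (ω (t+1)) = η (ω t) + g := by rw [hgdef]; ring
    nlinarith [h6, h7]
  -- geometric decay
  set c : ℝ := 1 - 1/(N:ℝ) with hc
  have hc0 : 0 ≤ c := by
    have h1 : (1:ℝ) ≤ (N:ℝ) := by exact_mod_cast hN
    have h2 : 1/(N:ℝ) ≤ 1 := by rw [div_le_one hNpos]; linarith
    rw [hc]; linarith
  have decay : ∀ t : ℕ, η S - η (ω t) ≤ c ^ t * (η S - η (ω 0)) := by
    intro t
    induction t with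
    | zero => simp
    | succ t ih =>
      have := step t
      calc η S - η (ω (t+1)) ≤ c * (η S - η (ω t)) := this
        _ ≤ c * (c ^ t * (η S - η (ω 0))) := mul_le_mul_of_nonneg_left ih hc0
        _ = c ^ (t+1) * (η S - η (ω 0)) := by ring
  have hδ0 : η S - η (ω 0) ≤ η S := by
    have := hnonneg (ω 0); linarith
  have hcexp : c ^ N ≤ Real.exp (-1) := by
    have h1 : c ≤ Real.exp (-(1/(N:ℝ))) := by
      have := Real.add_one_le_exp (-(1/(N:ℝ)))
      simp only [hc]; linarith
    have h2 : c ^ N ≤ Real.exp (-(1/(N:ℝ))) ^ N := pow_le_pow_left₀ hc0 h1 N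
    have h3 : Real.exp (-(1/(N:ℝ))) ^ N = Real.exp ((N:ℝ) * (-(1/(N:ℝ)))) := by
      rw [← Real.exp_nat_mul]
    have h4 : (N:ℝ) * (-(1/(N:ℝ))) = -1 := by
      field_simp
    rw [h3, h4] at h2; exact h2
  have hexp1 : Real.exp (-1) = 1 / Real.exp 1 := by
    rw [Real.exp_neg]; ring
  have hDN := decay N
  by_cases hpos : 0 ≤ η S - η (ω 0)
  · have : c ^ N * (η S - η (ω 0)) ≤ Real.exp (-1) * (η S - η (ω 0)) :=
      mul_le_mul_of_nonneg_right hcexp hpos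
    have h5 : Real.exp (-1) * (η S - η (ω 0)) ≤ Real.exp (-1) * η S :=
      mul_le_mul_of_nonneg_left hδ0 (Real.exp_pos _).le
    rw [hexp1] at this h5
    nlinarith
  · push_neg at hpos
    have hcn : 0 ≤ c ^ N := pow_nonneg hc0 N
    have : c ^ N * (η S - η (ω 0)) ≤ 0 := mul_nonpos_of_nonneg_of_nonpos hcn hpos.le
    have hSωN : η S ≤ η (ω N) := by linarith
    have hSnn := hnonneg S
    have hee : 1 / Real.exp 1 ≤ 1 := by
      rw [div_le_one (Real.exp_pos 1)]
      have := Real.add_one_le_exp (1:ℝ); linarith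
    nlinarith
end
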